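/- arXiv:2106.11854 — 4 statements merged into one kernel-verified Lean document; each statement's English description precedes it below -/
import Mathlib

section
/- Suppose r : List (S × A) → ℝ satisfies the Strong PI condition and is bounded. Let τ₁, τ₂ be lists of equal length, and let μ, ν : PMF (List (S × A)) be two continuation distributions whose pushforwards under List.length coincide (μ and ν assign the same probability to each continuation length). Then E_{τ'∼μ}[r(τ₁ ++ τ')] − E_{τ'∼ν}[r(τ₁ ++ τ')] = E_{τ'∼μ}[r(τ₂ ++ τ')] − E_{τ'∼ν}[r(τ₂ ++ τ')], where E_{τ'∼μ}[g(τ')] = ∑' l, (μ l).toReal * g(l). In particular, E_{μ}[r(τ₁ ++ ·)] > E_{ν}[r(τ₁ ++ ·)] if and only if E_{μ}[r(τ₂ ++ ·)] > E_{ν}[r(τ₂ ++ ·)]. (This is the order-invariance of Q-values over actions of the paper's Fact 3.2, established under the Strong PI condition: the continuation distributions induced by two actions at the same state do not depend on the history, and the interval-length distribution is action-independent, so their length marginals agree.) -/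
/-- The Strong Past-Invariant condition on a reward function over trajectory
segments. -/
def StrongPI {S A : Type*} (r : List (S × A) → ℝ) : Prop :=
  ∀ τ₁ τ₂ τ₁' τ₂' : List (S × A), τ₁.length = τ₂.length →
    τ₁'.length = τ₂'.length →
    r (τ₁ ++ τ₁') - r (τ₁ ++ τ₂') = r (τ₂ ++ τ₁') - r (τ₂ ++ τ₂')

/-!
Strong PI says precisely that `l ↦ r (τ₁ ++ l) - r (τ₂ ++ l)` depends on the continuation `l`
only through its length. Its expectation under a continuation distribution is therefore an
expectation under the length marginal, which `μ` and `ν` share; since `r` is bounded, expectation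
is linear, and the difference of the two expected gaps vanishes.
-/

namespace PMF

variable {α β : Type*}

theorem summable_toReal_mul_of_abs_le (p : PMF α) {g : α → ℝ} {C : ℝ} (hg : ∀ a, |g a| ≤ C) :
    Summable fun a => (p a).toReal * g a := by
  have hp : Summable fun a => (p a).toReal := ENNReal.summable_toReal (by simp [p.tsum_coe])
  refine (hp.mul_right C).of_norm_bounded fun a => ?_
  rw [Real.norm_eq_abs, abs_mul, ENNReal.abs_toReal]
  exact mul_le_mul_of_nonneg_left (hg a) ENNReal.toReal_nonneg

theorem map_apply_eq_tsum_preimage (p : PMF α) (f : α → β) (b : β) :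
    p.map f b = ∑' a : f ⁻¹' {b}, p a := by
  rw [← toOuterMeasure_apply_singleton, toOuterMeasure_map_apply, toOuterMeasure_apply,
    tsum_subtype]

theorem tsum_map_toReal_mul (p : PMF α) (f : α → β) {g : β → ℝ}
    (hs : Summable fun a => (p a).toReal * g (f a)) :
    ∑' b, (p.map f b).toReal * g b = ∑' a, (p a).toReal * g (f a) := by
  refine (tsum_congr fun b => ?_).trans (hs.hasSum.tsum_fiberwise f).tsum_eq
  calc (p.map f b).toReal * g b = (∑' a : f ⁻¹' {b}, (p a).toReal) * g b := by
        rw [map_apply_eq_tsum_preimage, ENNReal.tsum_toReal_eq fun _ => p.apply_ne_top _]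
    _ = ∑' a : f ⁻¹' {b}, (p a).toReal * g (f a) := by
        rw [← tsum_mul_right]
        exact tsum_congr fun a => by rw [Set.mem_singleton_iff.mp a.2]

theorem tsum_toReal_mul_comp_eq_of_map_eq {p q : PMF α} {f : α → β} (hpq : p.map f = q.map f)
    {g : β → ℝ} (hp : Summable fun a => (p a).toReal * g (f a))
    (hq : Summable fun a => (q a).toReal * g (f a)) :
    ∑' a, (p a).toReal * g (f a) = ∑' a, (q a).toReal * g (f a) := by
  rw [← tsum_map_toReal_mul p f hp, ← tsum_map_toReal_mul q f hq, hpq]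

end PMF

theorem StrongPI.exists_sub_eq_comp_length {S A : Type*} {r : List (S × A) → ℝ}
    (hr : StrongPI r) {τ₁ τ₂ : List (S × A)} (hlen : τ₁.length = τ₂.length) :
    ∃ f : ℕ → ℝ, ∀ l, r (τ₁ ++ l) - r (τ₂ ++ l) = f l.length := by
  have hfactor : (fun l => r (τ₁ ++ l) - r (τ₂ ++ l)).FactorsThrough List.length :=
    fun l l' h => by linarith [hr τ₁ τ₂ l l' hlen h]
  exact ⟨Function.extend List.length _ 0, fun l => (hfactor.extend_apply 0 l).symm⟩

/-- Order-invariance of expected returns over histories (Fact 3.2 under the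
Strong PI condition): if the continuation distributions `μ, ν` have the same
length marginals, then the difference of expected rewards between `μ` and `ν`
does not depend on the (equal-length) history; in particular the comparison of
expected rewards under `μ` and `ν` is invariant of the history. -/
theorem strongPI_expected_order_invariance {S A : Type*}
    (r : List (S × A) → ℝ) (hr : StrongPI r) (hb : ∃ M, ∀ l, |r l| ≤ M)
    (τ₁ τ₂ : List (S × A)) (hlen : τ₁.length = τ₂.length)
    (μ ν : PMF (List (S × A)))
    (hμν : μ.map List.length = ν.map List.length) :
    ((∑' l, (μ l).toReal * r (τ₁ ++ l)) - (∑' l, (ν l).toReal * r (τ₁ ++ l)) =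
      (∑' l, (μ l).toReal * r (τ₂ ++ l)) - (∑' l, (ν l).toReal * r (τ₂ ++ l))) ∧
    ((∑' l, (μ l).toReal * r (τ₁ ++ l)) > (∑' l, (ν l).toReal * r (τ₁ ++ l)) ↔
      (∑' l, (μ l).toReal * r (τ₂ ++ l)) > (∑' l, (ν l).toReal * r (τ₂ ++ l))) := by
  obtain ⟨M, hM⟩ := hb
  obtain ⟨f, hf⟩ := hr.exists_sub_eq_comp_length hlen
  have hsum (p : PMF (List (S × A))) (τ : List (S × A)) :
      Summable fun l => (p l).toReal * r (τ ++ l) :=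
    p.summable_toReal_mul_of_abs_le fun l => hM (τ ++ l)
  have hgap (p : PMF (List (S × A))) : HasSum (fun l => (p l).toReal * f l.length)
      ((∑' l, (p l).toReal * r (τ₁ ++ l)) - ∑' l, (p l).toReal * r (τ₂ ++ l)) := by
    simpa only [← mul_sub, hf] using (hsum p τ₁).hasSum.sub (hsum p τ₂).hasSum
  have hgap_eq := PMF.tsum_toReal_mul_comp_eq_of_map_eq hμν (hgap μ).summable (hgap ν).summable
  rw [(hgap μ).tsum_eq, (hgap ν).tsum_eq] at hgap_eq
  exact ⟨by linarith, by constructor <;> intro <;> linarith⟩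
end

section
/- For a history list h of length t and a current pair (s,a), define Q(h, s, a, t) = E_{l ∼ traj t s a}[ ∑_{(u,b) ∈ h ++ l} r̂(u,b) ], where the expectation of a function g against a PMF μ is ∑' l, (μ l).toReal * g(l). Then for all history lists h, h' of the same length t ≤ n−1, every state s ∈ S, and all actions a, a' ∈ A: Q(h, s, a, t) > Q(h, s, a', t) if and only if Q(h', s, a, t) > Q(h', s, a', t). (Paper's Fact 3.2 in the sum-form single-interval setting: the ordering of the Q-function over actions at a state is invariant of the trajectory already experienced inside the current signal interval.) -/
/-- Auxiliary trajectory distribution: `trajAux p pol m t s a` is the law of the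
remaining in-interval trajectory starting with `(s, a)` at step `t` when `m`
further steps remain. -/
noncomputable def trajAux {S A : Type*} (p : S → A → PMF S)
    (pol : ℕ → S → PMF A) : ℕ → ℕ → S → A → PMF (List (S × A))
  | 0, _, s, a => PMF.pure [(s, a)]
  | (m + 1), t, s, a =>
      (p s a).bind fun s' => (pol (t + 1) s').bind fun a' =>
        (trajAux p pol m (t + 1) s' a').map (fun l => (s, a) :: l)

/-- `traj p pol n t s a`: the distribution of the remaining signal interval of
horizon `n` starting with `(s, a)` at step `t`, so that
`traj p pol n (n-1) s a = PMF.pure [(s,a)]` and for `t < n-1`,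
`traj p pol n t s a = (p s a).bind fun s' => (pol (t+1) s').bind fun a' =>
  (traj p pol n (t+1) s' a').map ((s,a) :: ·)`. -/
noncomputable def traj {S A : Type*} (p : S → A → PMF S) (pol : ℕ → S → PMF A)
    (n t : ℕ) (s : S) (a : A) : PMF (List (S × A)) :=
  trajAux p pol (n - 1 - t) t s a

/-- The Q-value of a history `h`, current pair `(s,a)` and step `t`:
the expected sum-form reward of the full interval `h ++ l` with `l` drawn from
the remaining-trajectory distribution. -/
noncomputable def Qval {S A : Type*} (p : S → A → PMF S) (pol : ℕ → S → PMF A)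
    (rhat : S → A → ℝ) (n : ℕ) (h : List (S × A)) (s : S) (a : A) (t : ℕ) : ℝ :=
  ∑' l, ((traj p pol n t s a) l).toReal * (((h ++ l).map fun e => rhat e.1 e.2).sum)

lemma trajAux_len {S A : Type*} (p : S → A → PMF S) (pol : ℕ → S → PMF A) :
    ∀ m t s a l, l ∈ (trajAux p pol m t s a).support → l.length = m + 1 := by
  intro m
  induction m with
  | zero => intro t s a l hl; simp [trajAux] at hl; simp [hl]
  | succ m ih =>
    intro t s a l hl
    simp [trajAux, PMF.support_bind, PMF.support_map] at hl
    obtain ⟨s', _, a', _, l', hl', rfl⟩ := hl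
    simp [ih _ _ _ _ hl']

lemma summable_mul_aux {S A : Type*} (μ : PMF (List (S × A))) (M : ℝ)
    (g : List (S × A) → ℝ) (hg : ∀ l ∈ μ.support, |g l| ≤ M) :
    Summable fun l => (μ l).toReal * g l := by
  have hs : Summable fun l : List (S × A) => (μ l).toReal :=
    ENNReal.summable_toReal (by simp [μ.tsum_coe])
  have habs : Summable fun l => |(μ l).toReal * g l| := by
    apply Summable.of_nonneg_of_le (fun l => abs_nonneg _) _ (hs.mul_right M)
    intro l
    by_cases hl : l ∈ μ.support
    · rw [abs_mul, abs_of_nonneg ENNReal.toReal_nonneg]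
      exact mul_le_mul_of_nonneg_left (hg l hl) ENNReal.toReal_nonneg
    · have h0 : μ l = 0 := (PMF.apply_eq_zero_iff μ l).mpr hl
      simp [h0]
  exact habs.of_abs

lemma abs_listsum_le {S A : Type*} (rhat : S → A → ℝ) (B : ℝ)
    (hB : ∀ e : S × A, |rhat e.1 e.2| ≤ B) (l : List (S × A)) :
    |(l.map fun e => rhat e.1 e.2).sum| ≤ l.length * B := by
  induction l with
  | nil => simp
  | cons x xs ih =>
    simp only [List.map_cons, List.sum_cons, List.length_cons]
    calc |rhat x.1 x.2 + (xs.map fun e => rhat e.1 e.2).sum|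
        ≤ |rhat x.1 x.2| + |(xs.map fun e => rhat e.1 e.2).sum| := abs_add_le _ _
      _ ≤ B + xs.length * B := add_le_add (hB x) ih
      _ = ((xs.length : ℝ) + 1) * B := by ring
      _ = ((xs.length + 1 : ℕ) : ℝ) * B := by push_cast; ring

lemma Qval_split {S A : Type*} [Fintype S] [Fintype A] [Nonempty S] [Nonempty A]
    (p : S → A → PMF S) (pol : ℕ → S → PMF A) (rhat : S → A → ℝ)
    (n : ℕ) (h : List (S × A)) (s : S) (a : A) (t : ℕ) :
    Qval p pol rhat n h s a t =
      (h.map fun e => rhat e.1 e.2).sum + Qval p pol rhat n [] s a t := by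
  obtain ⟨B, hB⟩ : ∃ B, ∀ e : S × A, |rhat e.1 e.2| ≤ B :=
    Finite.exists_le fun e : S × A => |rhat e.1 e.2|
  set μ := traj p pol n t s a with hμ
  set c := (h.map fun e => rhat e.1 e.2).sum with hc
  set g : List (S × A) → ℝ := fun l => (l.map fun e => rhat e.1 e.2).sum with hgdef
  have hg : ∀ l ∈ μ.support, |g l| ≤ ((n - 1 - t + 1 : ℕ) : ℝ) * B := by
    intro l hl
    have hlen := trajAux_len p pol (n - 1 - t) t s a l hl
    have := abs_listsum_le rhat B hB l
    rw [hlen] at this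
    exact this
  have hsum1 : Summable fun l => (μ l).toReal * g l := summable_mul_aux μ _ g hg
  have hs : Summable fun l : List (S × A) => (μ l).toReal :=
    ENNReal.summable_toReal (by simp [μ.tsum_coe])
  have htot : ∑' l, (μ l).toReal = 1 := by
    rw [← ENNReal.tsum_toReal_eq (fun l => PMF.apply_ne_top μ l), μ.tsum_coe]
    simp
  have key : Qval p pol rhat n h s a t = ∑' l, ((μ l).toReal * c + (μ l).toReal * g l) := by
    unfold Qval
    rw [← hμ]
    congr 1
    ext l
    rw [List.map_append, List.sum_append, ← hc, mul_add]
  rw [key, Summable.tsum_add (hs.mul_right c) hsum1, tsum_mul_right, htot, one_mul]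
  simp only [Qval, ← hμ, hgdef, List.nil_append]

/-- Fact 3.2 in the sum-form single-interval setting: the ordering of the
Q-function over actions at a state is invariant of the trajectory already
experienced inside the current signal interval. -/
theorem q_order_invariant_of_history {S A : Type*} [Fintype S] [Fintype A]
    [Nonempty S] [Nonempty A]
    (p : S → A → PMF S) (pol : ℕ → S → PMF A) (rhat : S → A → ℝ)
    (n : ℕ) (hn : 1 ≤ n) (t : ℕ) (ht : t ≤ n - 1)
    (h h' : List (S × A)) (hh : h.length = t) (hh' : h'.length = t)
    (s : S) (a a' : A) :
    Qval p pol rhat n h s a t > Qval p pol rhat n h s a' t ↔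
      Qval p pol rhat n h' s a t > Qval p pol rhat n h' s a' t := by
  rw [Qval_split p pol rhat n h s a t, Qval_split p pol rhat n h s a' t,
    Qval_split p pol rhat n h' s a t, Qval_split p pol rhat n h' s a' t]
  simp [gt_iff_lt, add_lt_add_iff_left]
end

section
/- Let X be the uniform probability mass function on Bool (the random first transition a_i, i ∈ {0,1}, from the uniform initial state). For every probability mass function Y on Bool (a memoryless choice of b_j at state B, independent of the first transition), the expected XOR reward satisfies ∑_x ∑_y (X x).toReal * (Y y).toReal * (if x ≠ y then (1:ℝ) else 0) = 1/2, whereas the history-dependent choice b_{1−i} attains ∑_x (X x).toReal * (if x ≠ (¬x) then (1:ℝ) else 0) = 1, and 1/2 < 1. Hence every policy whose action at B is independent of the first transition is strictly suboptimal. (This is the construction proving the second claim of the paper's Fact 2.1: there exists a DRMDP, with fixed interval length n = 2 and reward r(a_i, b_j) = i ⊕ j, such that none of its optimal policies lies in the memoryless class Π_s.) -/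
/-!
Because the first transition is uniform, for each fixed second transition `y` exactly
`card α - 1` of the `card α` equally likely first transitions disagree with it; so the expected
mismatch is `1 - 1 / card α` whatever the law of `y`, i.e. `1/2` on `Bool`. A history-dependent
choice that always disagrees with the first transition earns reward `1` almost surely.
-/

open Finset

namespace PMF

variable {α : Type*} [Fintype α]

theorem sum_toReal_eq_one (p : PMF α) : ∑ a, (p a).toReal = 1 := by
  rw [← ENNReal.toReal_sum fun a _ => p.apply_ne_top a, ← tsum_fintype (L := .unconditional α),
    p.tsum_coe, ENNReal.toReal_one]

variable [DecidableEq α]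

theorem sum_toReal_mul_ite_ne_of_forall_ne (p : PMF α) {f : α → α} (hf : ∀ x, x ≠ f x) :
    ∑ x, (p x).toReal * (if x ≠ f x then (1 : ℝ) else 0) = 1 := by
  simp only [hf, ne_eq, not_false_eq_true, if_true, mul_one, p.sum_toReal_eq_one]

theorem sum_uniformOfFintype_mul_ite_ne [Nonempty α] (Y : PMF α) :
    ∑ x, ∑ y, ((uniformOfFintype α) x).toReal * (Y y).toReal * (if x ≠ y then (1 : ℝ) else 0)
      = 1 - 1 / Fintype.card α := by
  have hcard : (Fintype.card α : ℝ) ≠ 0 := Nat.cast_ne_zero.2 Fintype.card_ne_zero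
  have hmismatch (y : α) : ∑ x : α, (if x ≠ y then (1 : ℝ) else 0) = Fintype.card α - 1 := by
    rw [sum_boole, filter_ne', card_erase_of_mem (mem_univ y), card_univ,
      Nat.cast_sub Fintype.card_pos, Nat.cast_one]
  calc _ = ∑ y, (Y y).toReal * (1 - 1 / Fintype.card α) := by
        rw [sum_comm]
        refine sum_congr rfl fun y _ => ?_
        simp only [uniformOfFintype_apply, ENNReal.toReal_inv, ENNReal.toReal_natCast, mul_assoc,
          ← mul_sum, hmismatch]
        field_simp
    _ = 1 - 1 / Fintype.card α := by rw [← sum_mul, Y.sum_toReal_eq_one, one_mul]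

end PMF

/-- The XOR counterexample proving that some DRMDPs have no optimal policy in
the memoryless class `Π_s`: with the first transition `X` uniform on `Bool`,
every history-independent choice `Y` of the second transition attains expected
XOR reward `1/2`, while the history-dependent choice `b_{1−i}` attains `1`,
and `1/2 < 1`. -/
theorem memoryless_policy_suboptimal_xor :
    (∀ Y : PMF Bool,
      ∑ x : Bool, ∑ y : Bool,
        ((PMF.uniformOfFintype Bool) x).toReal * (Y y).toReal *
          (if x ≠ y then (1 : ℝ) else 0) = 1 / 2) ∧
    (∑ x : Bool,
      ((PMF.uniformOfFintype Bool) x).toReal *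
        (if x ≠ (!x) then (1 : ℝ) else 0) = 1) ∧
    (1 : ℝ) / 2 < 1 := by
  refine ⟨fun Y => ?_, PMF.sum_toReal_mul_ite_ne_of_forall_ne _ Bool.self_ne_not, by norm_num⟩
  rw [PMF.sum_uniformOfFintype_mul_ite_ne, Fintype.card_bool]
  norm_num
end

section
/- For every real γ with 0 < γ ≤ 1 and every p ∈ [0,1]: (a) γ * (p − 1) / 2 < 0.01 * γ, so the greedy policy with respect to the on-policy TD fixed point of the standard Q-function (which assigns Q_φ(A,a₀) = 0.01 * γ and Q_φ(A,a₁) = γ * (p − 1) / 2, where p = π(a₁|A) is the current policy's probability of a₁) selects a₀ for every p, including when the pre-update policy is already optimal; (b) the expected discounted return of the resulting policy is (1/2) * (0.01 * γ) + (1/2) * (−γ) = −0.495 * γ, which is strictly negative; and (c) the optimal policy, which selects a₁ at A, attains expected discounted return (1/2) * (1 * γ) + (1/2) * (−1 * γ) = 0 > −0.495 * γ. (Paper's appendix Fact: in the four-state sum-form PI-DRMDP example, value evaluation of the standard Q-function via equation (1) with on-policy data followed by policy iteration converges to a sub-optimal policy of value −0.495γ, while the optimal value is 0.) -/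
/-- The fixed-point-bias toy example: (a) the on-policy TD fixed point of the
standard Q-function satisfies `Q_φ(A,a₁) = γ(p−1)/2 < 0.01γ = Q_φ(A,a₀)` for
every policy probability `p = π(a₁|A)`, so greedy improvement always selects
`a₀`; (b) the resulting policy has expected discounted return `−0.495γ < 0`;
(c) the optimal policy (selecting `a₁`) attains return `0 > −0.495γ`. -/
theorem fixed_point_bias_toy_example (γ p : ℝ)
    (hγ0 : 0 < γ) (hγ1 : γ ≤ 1) (hp0 : 0 ≤ p) (hp1 : p ≤ 1) :
    (γ * (p - 1) / 2 < 0.01 * γ) ∧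
    ((1 / 2) * (0.01 * γ) + (1 / 2) * (-γ) = -0.495 * γ ∧ -0.495 * γ < 0) ∧
    ((1 / 2) * (1 * γ) + (1 / 2) * (-1 * γ) = 0 ∧ (0 : ℝ) > -0.495 * γ) := by
  refine ⟨?_, ⟨by ring, by nlinarith⟩, ⟨by ring, by nlinarith⟩⟩
  nlinarith
end
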